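/- arXiv:2305.03133 — 5 statements merged into one kernel-verified Lean document; each statement's English description precedes it below -/
import Mathlib

section
/- Every word over an alphabet A has a primitive generator: for every word c̄ over A there exists a primitive word ā that generates c̄. -/
/-- A function `f : {1,…,m} → {1,…,k}` (0-indexed here) is adjacent if the
indices of consecutive values differ by at most 1. -/
def Adjacent {m k : ℕ} (f : Fin m → Fin k) : Prop :=
  ∀ (i : ℕ) (h : i + 1 < m),
    |(((f ⟨i + 1, h⟩ : Fin k) : ℕ) : ℤ) - (((f ⟨i, Nat.lt_of_succ_lt h⟩ : Fin k) : ℕ) : ℤ)| ≤ 1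

/-- A word `a` generates a word `c` if `c = a^f` for some surjective adjacent `f`. -/
def Generates {A : Type*} (a c : List A) : Prop :=
  ∃ f : Fin c.length → Fin a.length,
    Adjacent f ∧ Function.Surjective f ∧ c = List.ofFn (fun i => a.get (f i))

/-- A word is primitive if it is not generated by any strictly shorter word. -/
def Primitive {A : Type*} (a : List A) : Prop :=
  ¬ ∃ b : List A, b.length < a.length ∧ Generates b a

/-- A primitive generator of `c` is a generator of `c` that is primitive. -/
def PrimitiveGenerator {A : Type*} (a c : List A) : Prop :=
  Primitive a ∧ Generates a c

/-! Generation is reflexive and transitive, so a generator of minimal length is primitive. -/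

section

variable {m k : ℕ} {f : Fin m → Fin k}

lemma Adjacent.abs_sub_le_one_of_val_eq_succ (hf : Adjacent f) {x y : Fin m}
    (hxy : (y : ℕ) = x + 1) : |((f y : ℕ) : ℤ) - ((f x : ℕ) : ℤ)| ≤ 1 := by
  obtain ⟨y, hy⟩ := y
  subst hxy
  exact hf x hy

lemma Adjacent.abs_sub_le_one (hf : Adjacent f) {x y : Fin m}
    (hxy : |((y : ℕ) : ℤ) - ((x : ℕ) : ℤ)| ≤ 1) :
    |((f y : ℕ) : ℤ) - ((f x : ℕ) : ℤ)| ≤ 1 := by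
  rcases abs_le.mp hxy with ⟨hlo, hhi⟩
  rcases (by omega : (y : ℕ) = x ∨ (y : ℕ) = x + 1 ∨ (x : ℕ) = y + 1) with h | h | h
  · simp [Fin.ext h]
  · exact hf.abs_sub_le_one_of_val_eq_succ h
  · rw [abs_sub_comm]
    exact hf.abs_sub_le_one_of_val_eq_succ h

lemma Adjacent.comp {n : ℕ} {g : Fin n → Fin m} (hf : Adjacent f) (hg : Adjacent g) :
    Adjacent (f ∘ g) :=
  fun i h => hf.abs_sub_le_one (hg i h)

end

section

variable {A : Type*}

lemma Generates.refl (c : List A) : Generates c c :=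
  ⟨id, fun _ _ => by simp, Function.surjective_id, by simp⟩

lemma Generates.trans {a b c : List A} (hab : Generates a b) (hbc : Generates b c) :
    Generates a c := by
  obtain ⟨f, hf, hf_surj, hb⟩ := hab
  obtain ⟨g, hg, hg_surj, hc⟩ := hbc
  have hb_get (j : Fin b.length) : b.get j = a.get (f j) := by
    rw [List.get_of_eq hb, List.get_ofFn]
    rfl
  exact ⟨f ∘ g, hf.comp hg, hf_surj.comp hg_surj,
    hc.trans (by simp only [hb_get, Function.comp_apply])⟩

end

/-- Every word has a primitive generator. -/
theorem exists_primitive_generator {A : Type*} (c : List A) :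
    ∃ a : List A, PrimitiveGenerator a c := by
  obtain ⟨a, hac, hmin⟩ :=
    (measure (List.length (α := A))).wf.has_min {a | Generates a c} ⟨c, Generates.refl c⟩
  refine ⟨a, ?_, hac⟩
  rintro ⟨b, hb, hba⟩
  exact hmin b (hba.trans hac) hb
end

section
/- If a word ā over an alphabet A generates a word c̄ with |c̄| = |ā|, then c̄ = ā or c̄ = ā⁻¹; that is, ā and ā⁻¹ are the only words of length |ā| generated by ā. -/
/-!
A generating map `f` of `c` from `a` is a surjection between index sets of equal size, hence a
bijection. An injective adjacent map moves by exactly one at each step and can never turn back,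
so it is strictly monotone or strictly antitone; the only such self-maps of `Fin n` are the
identity and `Fin.rev`.
-/

open Function

namespace Adjacent

variable {m k : ℕ} {f : Fin m → Fin k}

theorem abs_sub_eq_one (hf : Adjacent f) (hinj : Injective f) (i : ℕ) (h : i + 1 < m) :
    |(((f ⟨i + 1, h⟩ : Fin k) : ℕ) : ℤ) - (((f ⟨i, by omega⟩ : Fin k) : ℕ) : ℤ)| = 1 := by
  have hne : f ⟨i + 1, h⟩ ≠ f ⟨i, by omega⟩ := hinj.ne (by simp [Fin.ext_iff])
  have := hf i h
  rw [Ne, Fin.ext_iff] at hne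
  rw [abs_le] at this
  rw [abs_eq (by norm_num)]
  omega

/-- An injective adjacent map cannot turn back: that would repeat the value two steps earlier. -/
theorem sub_succ_eq_sub (hf : Adjacent f) (hinj : Injective f) (i : ℕ) (h : i + 1 + 1 < m) :
    (((f ⟨i + 1 + 1, h⟩ : Fin k) : ℕ) : ℤ) - (((f ⟨i + 1, by omega⟩ : Fin k) : ℕ) : ℤ) =
      (((f ⟨i + 1, by omega⟩ : Fin k) : ℕ) : ℤ) - (((f ⟨i, by omega⟩ : Fin k) : ℕ) : ℤ) := by
  have hne : f ⟨i + 1 + 1, h⟩ ≠ f ⟨i, by omega⟩ := hinj.ne (by simp [Fin.ext_iff]; omega)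
  rw [Ne, Fin.ext_iff] at hne
  have h₁ := hf.abs_sub_eq_one hinj (i + 1) h
  have h₀ := hf.abs_sub_eq_one hinj i (by omega)
  rw [abs_eq (by norm_num)] at h₀ h₁
  omega

theorem sub_eq_sub_zero (hf : Adjacent f) (hinj : Injective f) (i : ℕ) (h : i + 1 < m) :
    (((f ⟨i + 1, h⟩ : Fin k) : ℕ) : ℤ) - (((f ⟨i, by omega⟩ : Fin k) : ℕ) : ℤ) =
      (((f ⟨1, by omega⟩ : Fin k) : ℕ) : ℤ) - (((f ⟨0, by omega⟩ : Fin k) : ℕ) : ℤ) := by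
  induction i with
  | zero => rfl
  | succ i ih => rw [hf.sub_succ_eq_sub hinj i h, ih]

theorem strictMono_or_strictAnti (hf : Adjacent f) (hinj : Injective f) :
    StrictMono f ∨ StrictAnti f := by
  rcases Nat.lt_or_ge m 2 with hm | hm
  · have := Fin.subsingleton_iff_le_one.2 (Nat.le_of_lt_succ hm)
    exact .inl (Subsingleton.strictMono f)
  obtain ⟨n, rfl⟩ := Nat.exists_eq_add_of_le' hm
  have h₀ : |(((f ⟨1, by omega⟩ : Fin k) : ℕ) : ℤ) - (((f ⟨0, by omega⟩ : Fin k) : ℕ) : ℤ)| = 1 :=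
    hf.abs_sub_eq_one hinj 0 (by omega)
  rcases (abs_eq zero_le_one).1 h₀ with hup | hdown
  · refine .inl (Fin.strictMono_iff_lt_succ.2 fun i => ?_)
    have := hf.sub_eq_sub_zero hinj i (by omega)
    change f ⟨i, by omega⟩ < f ⟨i + 1, by omega⟩
    rw [Fin.lt_def]
    omega
  · refine .inr (Fin.strictAnti_iff_succ_lt.2 fun i => ?_)
    have := hf.sub_eq_sub_zero hinj i (by omega)
    change f ⟨i + 1, by omega⟩ < f ⟨i, by omega⟩
    rw [Fin.lt_def]
    omega

theorem eq_id_or_eq_rev {n : ℕ} {f : Fin n → Fin n} (hf : Adjacent f) (hsurj : Surjective f) :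
    f = id ∨ f = Fin.rev := by
  have hinj : Injective f := Finite.injective_iff_surjective.2 hsurj
  refine (hf.strictMono_or_strictAnti hinj).imp StrictMono.eq_id fun hanti => ?_
  funext i
  exact Fin.rev_eq_iff.1 (congrFun (Fin.rev_strictAnti.comp hanti).eq_id i)

theorem comp_cast {m' : ℕ} (hf : Adjacent f) (h : m' = m) : Adjacent (f ∘ Fin.cast h) :=
  fun i hi => hf i (h ▸ hi)

end Adjacent

theorem List.ofFn_get_rev {α : Type*} (l : List α) : List.ofFn (fun i => l.get i.rev) = l.reverse :=
  List.ext_getElem (by simp) fun i _ _ => by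
    simp only [List.get_eq_getElem, Fin.val_rev, List.getElem_ofFn, List.getElem_reverse]
    congr 1
    omega

/-- The only words of length `|a|` generated by `a` are `a` and its reversal. -/
theorem generates_eq_length {A : Type*} (a c : List A) (h : Generates a c)
    (hlen : c.length = a.length) :
    c = a ∨ c = a.reverse := by
  obtain ⟨f, hadj, hsurj, hc⟩ := h
  set g := f ∘ Fin.cast hlen.symm
  have hg : g = id ∨ g = Fin.rev :=
    (hadj.comp_cast hlen.symm).eq_id_or_eq_rev (hsurj.comp (finCongr hlen.symm).surjective)
  have hc' : c = List.ofFn (fun i => a.get (g i)) := hc.trans (List.ofFn_congr hlen _)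
  rcases hg with hg | hg <;> rw [hc', hg]
  · exact .inl (List.ofFn_get a)
  · exact .inr (List.ofFn_get_rev a)
end

section
/- Let c̄ be a word of length m over an alphabet A, and let d ∈ A be an element that does not occur in c̄. If the word c̄d (the concatenation of c̄ with the single letter d) is not primitive, then c̄ is not primitive either; in fact, there exist a word ā of length k < m and a surjective adjacent function f : {1,…,m} → {1,…,k} with f(m) = k such that ā^f = c̄. -/
/-!
Write `c ++ [d] = b^F` with `m = |c|`. Since `d ∉ c`, the value `p := F m` (the position of
`d` in `b`) is never taken on `0, …, m - 1`, so by adjacency all those values lie on one side of `p`;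
reversing `b` if necessary, they all lie below `p`. Surjectivity then forces `p` to be the
last position of `b`, and adjacency at the last step forces `F (m - 1) = p - 1`, so `F`
restricted to `c` exhibits `c` as generated by `b` with its last letter removed.
-/

open Function

section FinFunctions

variable {m k : ℕ}

theorem adjacent_iff {f : Fin m → Fin k} : Adjacent f ↔ ∀ i (h : i + 1 < m),
    (f ⟨i + 1, h⟩ : ℕ) ≤ f ⟨i, by omega⟩ + 1 ∧ (f ⟨i, by omega⟩ : ℕ) ≤ f ⟨i + 1, h⟩ + 1 := by
  refine forall₂_congr fun i h => ?_
  rw [abs_le]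
  omega

theorem Adjacent.comp_cast_s8 {n : ℕ} {f : Fin m → Fin k} (hf : Adjacent f) (h : n = m) :
    Adjacent (f ∘ Fin.cast h) :=
  fun i hi => hf i (by omega)

theorem Adjacent.comp_castSucc {f : Fin (m + 1) → Fin k} (hf : Adjacent f) :
    Adjacent (f ∘ Fin.castSucc) :=
  fun i hi => hf i (by omega)

theorem Adjacent.castLT {n : ℕ} {f : Fin m → Fin k} (hf : Adjacent f)
    (hlt : ∀ i, (f i : ℕ) < n) : Adjacent fun i => (f i).castLT (hlt i) :=
  hf

theorem Adjacent.rev {f : Fin m → Fin k} (hf : Adjacent f) : Adjacent fun i => (f i).rev := by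
  rw [adjacent_iff] at hf ⊢
  intro i h
  simp only [Fin.val_rev]
  have := hf i h
  omega

theorem Adjacent.forall_lt_of_forall_ne {f : Fin m → Fin k} (hf : Adjacent f) {p : Fin k}
    (hp : ∀ i, f i ≠ p) (hm : 0 < m) (h0 : f ⟨0, hm⟩ < p) : ∀ i, f i < p := by
  rintro ⟨i, hi⟩
  induction i with
  | zero => exact h0
  | succ i ih =>
    have hstep := (adjacent_iff.mp hf) i hi
    have hne := Fin.val_ne_of_ne (hp ⟨i + 1, hi⟩)
    have hlt : (f ⟨i, _⟩ : ℕ) < p := ih (by omega)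
    rw [Fin.lt_def]
    omega

theorem Adjacent.val_castSucc_add_one_eq_of_lt {f : Fin (m + 1) → Fin k} (hf : Adjacent f)
    (i : Fin m) (hi : (i : ℕ) + 1 = m) (hlt : f i.castSucc < f (Fin.last m)) :
    (f i.castSucc : ℕ) + 1 = f (Fin.last m) := by
  obtain ⟨i, hi'⟩ := i
  simp only at hi
  subst hi
  have := (adjacent_iff.mp hf) i (by omega)
  have hlast : Fin.last (i + 1) = ⟨i + 1, by omega⟩ := rfl
  simp only [Fin.castSucc_mk, Fin.lt_def, hlast] at hlt ⊢
  omega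

/-- A discrete intermediate value theorem. -/
theorem Adjacent.forall_lt_or_forall_gt {f : Fin m → Fin k} (hf : Adjacent f) {p : Fin k}
    (hp : ∀ i, f i ≠ p) : (∀ i, f i < p) ∨ ∀ i, p < f i := by
  rcases Nat.eq_zero_or_pos m with rfl | hm
  · exact Or.inl fun i => i.elim0
  rcases (hp ⟨0, hm⟩).lt_or_gt with h0 | h0
  · exact Or.inl (hf.forall_lt_of_forall_ne hp hm h0)
  · right
    have hrev := hf.rev.forall_lt_of_forall_ne (p := p.rev) (by simpa using hp) hm
      (by simpa using h0)
    simpa using hrev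

theorem Function.Surjective.val_last_add_one_eq {f : Fin (m + 1) → Fin k}
    (hf : Surjective f) (hlt : ∀ i : Fin m, f i.castSucc < f (Fin.last m)) :
    (f (Fin.last m) : ℕ) + 1 = k := by
  by_contra hne
  obtain ⟨i, hi⟩ := hf ⟨f (Fin.last m) + 1, by omega⟩
  induction i using Fin.lastCases with
  | last => simp [Fin.ext_iff] at hi
  | cast j => have := hlt j; rw [hi, Fin.lt_def] at this; simp at this

theorem Function.Surjective.exists_castSucc_eq {f : Fin (m + 1) → Fin k}
    (hf : Surjective f) {j : Fin k} (hj : j ≠ f (Fin.last m)) : ∃ i : Fin m, f i.castSucc = j := by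
  obtain ⟨i, rfl⟩ := hf j
  induction i using Fin.lastCases with
  | last => exact absurd rfl hj
  | cast i => exact ⟨i, rfl⟩

end FinFunctions

section Words

variable {A : Type*}

def GeneratesLastToLast (a c : List A) : Prop :=
  ∃ f : Fin c.length → Fin a.length, Adjacent f ∧ Surjective f ∧
    (∀ h0 : 0 < c.length, (f ⟨c.length - 1, Nat.sub_one_lt_of_lt h0⟩ : ℕ) = a.length - 1) ∧
    c = List.ofFn (fun i => a.get (f i))

theorem GeneratesLastToLast.generates {a c : List A} (h : GeneratesLastToLast a c) :
    Generates a c :=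
  let ⟨f, hf, hs, _, hc⟩ := h
  ⟨f, hf, hs, hc⟩

theorem exists_generatesLastToLast_of_forall_lt_last {b w : List A}
    {F : Fin (w.length + 1) → Fin b.length} (hF : Adjacent F) (hs : Surjective F)
    (hw : ∀ i : Fin w.length, w[i] = b[F i.castSucc])
    (hlt : ∀ i : Fin w.length, F i.castSucc < F (Fin.last _)) :
    ∃ a : List A, a.length + 1 = b.length ∧ GeneratesLastToLast a w := by
  set p := F (Fin.last _)
  have hp : (p : ℕ) + 1 = b.length := hs.val_last_add_one_eq hlt
  have hlen : (b.take p).length = p := by simp only [List.length_take]; omega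
  have hlt' : ∀ i : Fin w.length, (F i.castSucc : ℕ) < (b.take p).length := fun i => by
    rw [hlen]; exact hlt i
  refine ⟨b.take p, by omega, fun i => (F i.castSucc).castLT (hlt' i),
    hF.comp_castSucc.castLT hlt', fun j => ?_, fun h0 => ?_, ?_⟩
  · have hj : (j : ℕ) < p := j.isLt.trans_eq hlen
    obtain ⟨i, hi⟩ := hs.exists_castSucc_eq (j := ⟨j, by omega⟩)
      (Fin.ne_of_lt (show (⟨j, _⟩ : Fin b.length) < p from hj))
    exact ⟨i, Fin.ext (by simp [hi])⟩
  · have := hF.val_castSucc_add_one_eq_of_lt ⟨w.length - 1, by omega⟩ (by simp; omega) (hlt _)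
    simp only [Fin.val_castLT, hlen]
    omega
  · refine List.ext_getElem (by simp) fun n h₁ h₂ => ?_
    simpa using hw ⟨n, h₁⟩

theorem Adjacent.exists_reindex_reverse {b : List A} {n : ℕ} {F : Fin n → Fin b.length}
    (hF : Adjacent F) (hs : Surjective F) :
    ∃ G : Fin n → Fin b.reverse.length, Adjacent G ∧ Surjective G ∧
      (∀ i, b.reverse[G i] = b[F i]) ∧ ∀ i j, G i < G j ↔ F j < F i := by
  refine ⟨fun i => (F i).rev.cast List.length_reverse.symm, hF.rev,
    (finCongr List.length_reverse.symm).surjective.comp (Fin.rev_surjective.comp hs),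
    fun i => ?_, fun i j => ?_⟩
  · simp only [Fin.getElem_fin, List.getElem_reverse, Fin.val_cast, Fin.val_rev]
    congr 1
    omega
  · simp only [Fin.lt_def, Fin.val_cast, Fin.val_rev]
    omega

theorem exists_generatesLastToLast_of_generates_snoc {b w : List A} {d : A} (hd : d ∉ w)
    (hb : b.length ≤ w.length) (hgen : Generates b (w ++ [d])) :
    ∃ a : List A, a.length < w.length ∧ GeneratesLastToLast a w := by
  obtain ⟨F₀, hF₀, hs₀, hwd⟩ := hgen
  have hlen : w.length + 1 = (w ++ [d]).length := by simp
  set F := F₀ ∘ Fin.cast hlen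
  have hF : Adjacent F := hF₀.comp_cast_s8 hlen
  have hs : Surjective F := hs₀.comp (finCongr hlen).surjective
  have hw : ∀ i : Fin w.length, w[i] = b[F i.castSucc] := fun i => by
    have := List.getElem_of_eq hwd (i := i) (by simp)
    rw [List.getElem_append_left i.isLt, List.getElem_ofFn] at this
    exact this
  have hdF : b[F (Fin.last _)] = d := by
    have := List.getElem_of_eq hwd (i := w.length) (by simp)
    simp only [List.getElem_concat_length, List.getElem_ofFn] at this
    exact this.symm
  have hne : ∀ i : Fin w.length, F i.castSucc ≠ F (Fin.last _) := fun i h => by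
    have hwi : w[i] = d := by rw [hw i]; simp only [h]; exact hdF
    exact hd (hwi ▸ List.getElem_mem _)
  rcases hF.comp_castSucc.forall_lt_or_forall_gt hne with hlt | hgt
  · obtain ⟨a, ha, hac⟩ := exists_generatesLastToLast_of_forall_lt_last hF hs hw hlt
    exact ⟨a, by omega, hac⟩
  · obtain ⟨G, hG, hsG, hbG, hGF⟩ := hF.exists_reindex_reverse hs
    obtain ⟨a, ha, hac⟩ := exists_generatesLastToLast_of_forall_lt_last hG hsG
      (fun i => (hw i).trans (hbG _).symm) (fun i => (hGF _ _).2 (hgt i))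
    exact ⟨a, by rw [List.length_reverse] at ha; omega, hac⟩

end Words

/-- If `d` does not occur in `c` and `c ++ [d]` is not primitive, then neither
is `c`; in fact `c = a^f` for some strictly shorter word `a` and a surjective
adjacent `f` whose last value is the last position of `a`. -/
theorem not_primitive_of_not_primitive_snoc {A : Type*} (c : List A) (d : A)
    (hd : d ∉ c) (h : ¬ Primitive (c ++ [d])) :
    ¬ Primitive c ∧
      ∃ a : List A, a.length < c.length ∧
        ∃ f : Fin c.length → Fin a.length,
          Adjacent f ∧ Function.Surjective f ∧
          (∀ h0 : 0 < c.length,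
            ((f ⟨c.length - 1, by omega⟩ : Fin a.length) : ℕ) = a.length - 1) ∧
          c = List.ofFn (fun i => a.get (f i)) := by
  obtain ⟨b, hb, hgen⟩ := not_not.mp h
  obtain ⟨a, ha, hac⟩ :=
    exists_generatesLastToLast_of_generates_snoc hd (by simpa using hb) hgen
  exact ⟨fun hc => hc ⟨a, ha, hac.generates⟩, a, ha, hac⟩
end

section
/- For any integer k > 0 there exist a set J with |J| = (k² + k + 1)^(k+1) and a function g : J^k → J such that for every tuple t̄ = (t₁,…,t_k) ∈ J^k: (i) g(t̄) ∉ {t₁,…,t_k}; and (ii) if t̄' ∈ J^k is any tuple whose entries are exactly the elements t₂,…,t_k,g(t̄) in some order (i.e., t̄' is a permutation of the tuple (t₂,…,t_k,g(t̄))), then g(t̄') ∉ {t₁,…,t_k}. -/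
/-! Take for `J` the words of length `k + 1` over an alphabet of `k² + k + 1` letters. The tuple
`t` uses at most `k (k + 1)` letters, so some letter `c t` occurs in none of its entries; let
`g t` be the word `c t, (t₁)₀, …, (t_k)₀`. Its first letter keeps `g t` away from every `tᵢ`.
If `t'` is a rearrangement of `(t₂, …, t_k, g t)`, then `g t` is an entry of `t'`, so every
letter `(tᵢ)₀` occurs in `t'`; the first letter of `g t'` avoids them all, hence `g t' ≠ tᵢ`. -/

theorem exists_forall_ne_of_card_lt {ι σ : Type*} [Fintype ι] [Fintype σ] (f : ι → σ)
    (h : Fintype.card ι < Fintype.card σ) : ∃ c, ∀ i, f i ≠ c := by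
  by_contra! hsurj
  exact (Fintype.card_le_of_surjective f fun c => hsurj c).not_gt h

section CircularMap

variable {σ : Type*} {k : ℕ}

def circularMap (c : (Fin k → Fin (k + 1) → σ) → σ) (t : Fin k → Fin (k + 1) → σ) :
    Fin (k + 1) → σ :=
  Fin.cons (c t) fun i => t i 0

variable {c : (Fin k → Fin (k + 1) → σ) → σ}

theorem circularMap_ne (hc : ∀ t i j, t i j ≠ c t) (t : Fin k → Fin (k + 1) → σ) (i : Fin k) :
    circularMap c t ≠ t i := fun h => hc t i 0 (congrFun h 0).symm

theorem circularMap_ne_of_eq (hc : ∀ t i j, t i j ≠ c t) {t t' : Fin k → Fin (k + 1) → σ}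
    {j : Fin k} (hj : circularMap c t = t' j) (i : Fin k) : circularMap c t' ≠ t i := by
  intro h
  apply hc t' j i.succ
  calc t' j i.succ = circularMap c t i.succ := (congrFun hj i.succ).symm
    _ = t i 0 := Fin.cons_succ _ _ i
    _ = c t' := (congrFun h 0).symm

end CircularMap

theorem circular_witness_general (k : ℕ) :
    ∃ (J : Type) (g : (Fin k → J) → J),
      Nat.card J = (k ^ 2 + k + 1) ^ (k + 1) ∧
      ∀ t : Fin k → J,
        (∀ i, g t ≠ t i) ∧
        (∀ t' : Fin k → J,
          (List.ofFn t').Perm ((List.ofFn t).tail ++ [g t]) →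
          ∀ i, g t' ≠ t i) := by
  have hfresh (t : Fin k → Fin (k + 1) → Fin (k ^ 2 + k + 1)) : ∃ c, ∀ i j, t i j ≠ c := by
    obtain ⟨c, hc⟩ := exists_forall_ne_of_card_lt (fun p : Fin k × Fin (k + 1) => t p.1 p.2)
      (by simp only [Fintype.card_prod, Fintype.card_fin]; nlinarith)
    exact ⟨c, fun i j => hc (i, j)⟩
  choose c hc using hfresh
  refine ⟨Fin (k + 1) → Fin (k ^ 2 + k + 1), circularMap c, by simp, fun t =>
    ⟨circularMap_ne hc t, fun t' hperm => ?_⟩⟩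
  obtain ⟨j, hj⟩ := List.mem_ofFn.1
    (hperm.mem_iff.2 (List.mem_append_right _ (List.mem_singleton_self _)))
  exact circularMap_ne_of_eq hc hj.symm

/-- For every `k > 0` there are a set `J` of cardinality `(k² + k + 1)^(k+1)`
and a function `g : J^k → J` such that for every tuple `t`, `g t` avoids the
entries of `t`, and moreover for any tuple `t'` which is a permutation of
`(t₂, …, t_k, g t)`, the value `g t'` also avoids the entries of `t`. -/
theorem circular_witness (k : ℕ) (hk : 0 < k) :
    ∃ (J : Type) (g : (Fin k → J) → J),
      Nat.card J = (k ^ 2 + k + 1) ^ (k + 1) ∧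
      ∀ t : Fin k → J,
        (∀ i, g t ≠ t i) ∧
        (∀ t' : Fin k → J,
          (List.ofFn t').Perm ((List.ofFn t).tail ++ [g t]) →
          ∀ i, g t' ≠ t i) :=
  circular_witness_general k
end

section
/- Let m ≥ 0, let A be a set, and let a, b, a', b' ∈ A. Suppose F ⊆ A^(2m+4) is a set of words of length 2m+4 over A such that: (seed) the word b^m·b a a' b'·b'^m (m copies of b, then the letters b, a, a', b', then m copies of b') belongs to F; and (closure) for all i, j ∈ {0,1,2,3}, whenever a word s̄·t̄ belongs to F, where |s̄| = |t̄| = m+2, the word ((s̄⁻¹)^{λ_i})⁻¹ · (t̄^{λ_j}) also belongs to F. Then for every c̄ ∈ {a,b}^m and every c̄' ∈ {a',b'}^m, the word c̄·b a a' b'·c̄' belongs to F. -/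
/-- `lam1` (1-indexed: 1,2 ↦ themselves; j ↦ j−1 for j ≥ 3), written 0-indexed. -/
def lam1 (m : ℕ) : Fin (m + 2) → Fin (m + 2) :=
  fun i => if i.val ≤ 1 then i else ⟨i.val - 1, by have := i.isLt; omega⟩

/-- `lam2` (1-indexed: 1,2 ↦ themselves; j ↦ j−2 for j ≥ 3), written 0-indexed. -/
def lam2 (m : ℕ) : Fin (m + 2) → Fin (m + 2) :=
  fun i => if i.val ≤ 1 then i else ⟨i.val - 2, by have := i.isLt; omega⟩

/-- `lam3` (1-indexed: 1,2,3 ↦ themselves; j ↦ j−1 for j ≥ 4), written 0-indexed. -/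
def lam3 (m : ℕ) : Fin (m + 2) → Fin (m + 2) :=
  fun i => if i.val ≤ 2 then i else ⟨i.val - 1, by have := i.isLt; omega⟩

/-- Concatenation of two words of length `m+2` into a word of length `2m+4`. -/
def concatW {A : Type*} (m : ℕ) (s t : Fin (m + 2) → A) : Fin (2 * m + 4) → A :=
  fun i =>
    if h : i.val < m + 2 then s ⟨i.val, h⟩
    else t ⟨i.val - (m + 2), by have := i.isLt; omega⟩

/-- Reversal of a word. -/
def wrev {n : ℕ} {A : Type*} (w : Fin n → A) : Fin n → A := w ∘ Fin.rev

/-!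
Identify a word `x y e₀ … e_{m-1}` of length `m + 2` with the first `m + 2` letters of the
stream `x :: y :: e`. Then `λ₁`, `λ₂`, `λ₃` act on the tail `e` by prepending `y`, prepending
`x y`, and repeating its first letter. Hence from the tail `y y y …` every tail `d ++ y y …` with
`d` a word over `{x, y}` is reached, by induction on `d`: a leading `y` comes from `λ₁`, a leading
`x x` from `λ₃`, and a leading `x y` (or a final `x`, since `y y …` starts with `y`) from `λ₂`.
Taking `λᵢ = id` this generates the right half `a' b' c̄'`; then, taking `λⱼ = id`, the same
argument applied to the reversed left half `a b c̄⁻¹` generates the left half.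
-/

section Words

variable {A : Type*}

open Stream'

theorem wrev_wrev {n : ℕ} (w : Fin n → A) : wrev (wrev w) = w := by
  simp [wrev, Function.comp_assoc, Fin.rev_involutive.comp_self]

def takeFin (n : ℕ) (s : Stream' A) : Fin n → A := fun i => s.get i

theorem Stream'.get_cons_cons (x y : A) (e : Stream' A) (n : ℕ) :
    (x :: y :: e).get n = if n = 0 then x else if n = 1 then y else e.get (n - 2) := by
  rcases n with _ | _ | n <;> rfl

variable {m : ℕ}

theorem takeFin_comp_lam1 (x y : A) (e : Stream' A) :
    takeFin (m + 2) (x :: y :: e) ∘ lam1 m = takeFin (m + 2) (x :: y :: y :: e) := by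
  funext i; rcases i with ⟨_ | _ | k, hk⟩ <;> rfl

theorem takeFin_comp_lam2 (x y : A) (e : Stream' A) :
    takeFin (m + 2) (x :: y :: e) ∘ lam2 m = takeFin (m + 2) (x :: y :: x :: y :: e) := by
  funext i; rcases i with ⟨_ | _ | k, hk⟩ <;> rfl

theorem takeFin_comp_lam3 (x y z : A) (e : Stream' A) :
    takeFin (m + 2) (x :: y :: z :: e) ∘ lam3 m = takeFin (m + 2) (x :: y :: z :: z :: e) := by
  funext i; rcases i with ⟨_ | _ | _ | k, hk⟩ <;> rfl

theorem takeFin_append_const_mem {G : Set (Fin (m + 2) → A)} {x y : A}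
    (hG : ∀ l ∈ ({lam1 m, lam2 m, lam3 m} : Set (Fin (m + 2) → Fin (m + 2))), ∀ u ∈ G, u ∘ l ∈ G)
    (hseed : takeFin (m + 2) (x :: y :: const y) ∈ G) :
    ∀ L : List A, (∀ z ∈ L, z = x ∨ z = y) → takeFin (m + 2) (x :: y :: (L ++ₛ const y)) ∈ G
  | [], _ => hseed
  | [z], hL => by
    rcases hL z List.mem_cons_self with rfl | rfl
    · have := hG (lam2 m) (by simp) _ hseed
      rwa [takeFin_comp_lam2, ← const_eq] at this
    · have := hG (lam1 m) (by simp) _ hseed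
      rwa [takeFin_comp_lam1] at this
  | .cons z (.cons w L), hL => by
    have hwL := takeFin_append_const_mem hG hseed (w :: L) fun v hv => hL v (.tail _ hv)
    have hL' := takeFin_append_const_mem hG hseed L fun v hv => hL v (.tail _ (.tail _ hv))
    rcases hL z List.mem_cons_self with rfl | rfl
    · rcases hL w (.tail _ List.mem_cons_self) with rfl | rfl
      · have := hG (lam3 m) (by simp) _ hwL
        rwa [cons_append_stream, takeFin_comp_lam3] at this
      · have := hG (lam2 m) (by simp) _ hL'
        rwa [takeFin_comp_lam2] at this
    · have := hG (lam1 m) (by simp) _ hwL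
      rwa [takeFin_comp_lam1] at this

theorem seed_eq_concatW (a b a' b' : A) :
    (fun i : Fin (2 * m + 4) =>
        if i.val ≤ m then b
        else if i.val = m + 1 then a
        else if i.val = m + 2 then a'
        else b') =
      concatW m (wrev (takeFin (m + 2) (a :: b :: const b)))
        (takeFin (m + 2) (a' :: b' :: const b')) := by
  funext i
  simp only [concatW, wrev, takeFin, Function.comp_apply, get_cons_cons, Fin.val_rev, get_const]
  split_ifs <;> first | rfl | omega

end Words

/-- If `F` contains the seed word `b^m·b a a' b'·b'^m` and is closed under the
operation sending `s̄·t̄` to `((s̄⁻¹)^{λᵢ})⁻¹·(t̄^{λⱼ})` for `i, j ∈ {0,1,2,3}`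
(`λ₀` being the identity), then `F` contains every word `c̄·b a a' b'·c̄'` with
`c̄ ∈ {a,b}^m` and `c̄' ∈ {a',b'}^m`. -/
theorem generation_of_guard_tuples {A : Type*} (m : ℕ) (a b a' b' : A)
    (F : Set (Fin (2 * m + 4) → A))
    (hseed : (fun i : Fin (2 * m + 4) =>
        if i.val ≤ m then b
        else if i.val = m + 1 then a
        else if i.val = m + 2 then a'
        else b') ∈ F)
    (hclose : ∀ li ∈ ({id, lam1 m, lam2 m, lam3 m} : Set (Fin (m + 2) → Fin (m + 2))),
        ∀ lj ∈ ({id, lam1 m, lam2 m, lam3 m} : Set (Fin (m + 2) → Fin (m + 2))),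
        ∀ s t : Fin (m + 2) → A, concatW m s t ∈ F →
          concatW m (wrev (wrev s ∘ li)) (t ∘ lj) ∈ F) :
    ∀ c c' : Fin m → A,
      (∀ i, c i = a ∨ c i = b) → (∀ i, c' i = a' ∨ c' i = b') →
      (fun i : Fin (2 * m + 4) =>
        if h0 : i.val < m then c ⟨i.val, h0⟩
        else if h1 : i.val = m then b
        else if h2 : i.val = m + 1 then a
        else if h3 : i.val = m + 2 then a'
        else if h4 : i.val = m + 3 then b'
        else c' ⟨i.val - (m + 4), by have := i.isLt; omega⟩) ∈ F := by
  intro c c' hc hc'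
  rw [seed_eq_concatW] at hseed
  have hright : ∀ s, ∀ l ∈ ({lam1 m, lam2 m, lam3 m} : Set (Fin (m + 2) → Fin (m + 2))),
      ∀ t ∈ {t | concatW m s t ∈ F}, t ∘ l ∈ {t | concatW m s t ∈ F} := fun s l hl t h => by
    simpa [wrev_wrev] using hclose id (by simp) l (Set.subset_insert _ _ hl) s t h
  have hleft : ∀ t, ∀ l ∈ ({lam1 m, lam2 m, lam3 m} : Set (Fin (m + 2) → Fin (m + 2))),
      ∀ u ∈ {u | concatW m (wrev u) t ∈ F}, u ∘ l ∈ {u | concatW m (wrev u) t ∈ F} :=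
    fun t l hl u h => by
      simpa [wrev_wrev] using hclose l (Set.subset_insert _ _ hl) id (by simp) (wrev u) t h
  have hsuffix := takeFin_append_const_mem (hright _) hseed (List.ofFn c') (by simpa using hc')
  have hfull := takeFin_append_const_mem (hleft _) hsuffix (List.ofFn c).reverse (by simpa using hc)
  convert Set.mem_ofPred.mp hfull using 1
  funext i
  simp only [concatW, wrev, takeFin, Function.comp_apply, Stream'.get_cons_cons, Fin.val_rev]
  split_ifs <;> first | rfl | omega | skip
  · rw [Stream'.get_append_left (h := by simp; omega)]
    simp only [List.getElem_reverse, List.getElem_ofFn, List.length_ofFn]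
    congr 2; omega
  · rw [Stream'.get_append_left (h := by simp; omega)]
    simp only [List.getElem_ofFn]
    congr 2
end
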